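/- arXiv:math/0703591 — 5 statements merged into one kernel-verified Lean document; each statement's English description precedes it below -/
import Mathlib

section
/- Let X be a compact metric space and f : X → X a continuous open map. Then for every compact connected subset A of X and every connected component B of f⁻¹(A), one has f(B) = A. -/
/-- Let `X` be a compact metric space and `f : X → X` a continuous open map. Then for
every compact connected subset `A` of `X` and every connected component `B` of
`f⁻¹(A)`, one has `f(B) = A`. -/
theorem stmt_0 {X : Type*} [MetricSpace X] [CompactSpace X]
    (f : X → X) (hf : Continuous f) (hfo : IsOpenMap f)
    (A : Set X) (hAc : IsCompact A) (hAconn : IsConnected A)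
    (B : Set X) (hB : ∃ x ∈ f ⁻¹' A, B = connectedComponentIn (f ⁻¹' A) x) :
    f '' B = A := by
  obtain ⟨x, hx, rfl⟩ := hB
  set K : Set X := f ⁻¹' A with hKdef
  have hKcl : IsClosed K := hAc.isClosed.preimage hf
  have hKc : IsCompact K := hKcl.isCompact
  haveI : CompactSpace K := isCompact_iff_compactSpace.mp hKc
  -- Key: the image of any nonempty clopen subset of `K` under `f` is all of `A`.
  have key : ∀ Z : Set K, IsClopen Z → Z.Nonempty → A ⊆ f '' (Subtype.val '' Z) := by
    intro Z hZ hZne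
    set C : Set X := Subtype.val '' Z with hCdef
    have hCsub : C ⊆ K := by rintro _ ⟨z, _, rfl⟩; exact z.2
    have hCc : IsCompact C := (hZ.isClosed.isCompact).image continuous_subtype_val
    have hCc' : IsCompact (K \ C) := by
      have hEq : K \ C = Subtype.val '' Zᶜ := by
        ext y
        constructor
        · rintro ⟨hyK, hyC⟩
          exact ⟨⟨y, hyK⟩, fun h => hyC ⟨⟨y, hyK⟩, h, rfl⟩, rfl⟩
        · rintro ⟨z, hz, rfl⟩
          refine ⟨z.2, ?_⟩
          rintro ⟨z', hz', hzz⟩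
          exact hz ((Subtype.ext hzz : z' = z) ▸ hz')
      rw [hEq]
      exact (hZ.isOpen.isClosed_compl.isCompact).image continuous_subtype_val
    set V : Set X := (K \ C)ᶜ with hVdef
    have hVo : IsOpen V := hCc'.isClosed.isOpen_compl
    have hCV : C ⊆ V := fun c hc h => h.2 hc
    have hKV : K ∩ V ⊆ C := by
      rintro y ⟨hyK, hyV⟩
      by_contra h
      exact hyV ⟨hyK, h⟩
    have hfC_sub : f '' C ⊆ A := by rintro _ ⟨c, hc, rfl⟩; exact hCsub hc
    have hAfV : A ∩ f '' V ⊆ f '' C := by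
      rintro a ⟨ha, v, hv, rfl⟩
      exact ⟨v, hKV ⟨ha, hv⟩, rfl⟩
    have hfCne : (f '' C).Nonempty := ((hZne.image _).image f)
    have hfCcl : IsClosed (f '' C) := (hCc.image hf).isClosed
    by_contra hcon
    obtain ⟨a, ha, haC⟩ := Set.not_subset.mp hcon
    have hpc := hAconn.isPreconnected
    have h := hpc (f '' V) ((f '' C)ᶜ) (hfo V hVo) hfCcl.isOpen_compl
      (by
        intro y hy
        by_cases h' : y ∈ f '' C
        · obtain ⟨c, hc, rfl⟩ := h'
          exact Or.inl ⟨c, hCV hc, rfl⟩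
        · exact Or.inr h')
      (by
        obtain ⟨c, hc⟩ := hfCne
        refine ⟨c, hfC_sub hc, ?_⟩
        obtain ⟨v, hv, rfl⟩ := hc
        exact ⟨v, hCV hv, rfl⟩)
      ⟨a, ha, haC⟩
    obtain ⟨y, hyA, hyV, hyC⟩ := h
    exact hyC (hAfV ⟨hyA, hyV⟩)
  apply Set.Subset.antisymm
  · rintro _ ⟨b, hb, rfl⟩
    exact (connectedComponentIn_subset K x) hb
  · intro a ha
    -- directed family of nonempty compact closed sets
    set ι := { s : Set K // IsClopen s ∧ (⟨x, hx⟩ : K) ∈ s } with hιdef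
    haveI : Nonempty ι := ⟨⟨Set.univ, isClopen_univ, Set.mem_univ _⟩⟩
    set S : ι → Set K := fun Z => Z.1 ∩ (fun z : K => f z.1) ⁻¹' {a} with hSdef
    have hScl : ∀ Z : ι, IsClosed (S Z) :=
      fun Z => Z.2.1.isClosed.inter
        ((isClosed_singleton).preimage (hf.comp continuous_subtype_val))
    have hSc : ∀ Z : ι, IsCompact (S Z) := fun Z => (hScl Z).isCompact
    have hSne : ∀ Z : ι, (S Z).Nonempty := by
      intro Z
      have := key Z.1 Z.2.1 ⟨_, Z.2.2⟩ ha
      obtain ⟨_, ⟨z, hz, rfl⟩, hfz⟩ := this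
      exact ⟨z, hz, hfz⟩
    have hSd : Directed (· ⊇ ·) S := by
      intro Z₁ Z₂
      refine ⟨⟨Z₁.1 ∩ Z₂.1, Z₁.2.1.inter Z₂.2.1, Z₁.2.2, Z₂.2.2⟩, ?_, ?_⟩
      · rintro z ⟨⟨h1, _⟩, h2⟩; exact ⟨h1, h2⟩
      · rintro z ⟨⟨_, h1⟩, h2⟩; exact ⟨h1, h2⟩
    obtain ⟨z, hz⟩ :=
      IsCompact.nonempty_iInter_of_directed_nonempty_isCompact_isClosed S hSd hSne hSc hScl
    simp only [Set.mem_iInter, hSdef, Set.mem_inter_iff, Set.mem_preimage,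
      Set.mem_singleton_iff] at hz
    have hzcc : z ∈ connectedComponent (⟨x, hx⟩ : K) := by
      rw [connectedComponent_eq_iInter_isClopen]
      exact Set.mem_iInter.mpr fun Z => (hz Z).1
    have hzB : (z : X) ∈ connectedComponentIn K x := by
      rw [connectedComponentIn_eq_image hx]
      exact ⟨z, hzcc, rfl⟩
    exact ⟨z, hzB, (hz ⟨Set.univ, isClopen_univ, Set.mem_univ _⟩).2⟩
end

section
/- Define, for nonempty compact connected subsets K₁, K₂ of ℂ, the relation K₁ ≤ K₂ to mean: K₁ = K₂, or K₁ is contained in some bounded connected component of ℂ ∖ K₂. Then ≤ is a partial order (reflexive, antisymmetric, and transitive) on the collection of nonempty compact connected subsets of ℂ. -/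
/-- The surrounding order: `K₁ ≤ K₂` iff `K₁ = K₂`, or `K₁` is contained in a
bounded connected component of `ℂ \ K₂`. -/
def SurroundingLE (K₁ K₂ : Set ℂ) : Prop :=
  K₁ = K₂ ∨ ∃ x ∈ K₂ᶜ, Bornology.IsBounded (connectedComponentIn K₂ᶜ x) ∧
    K₁ ⊆ connectedComponentIn K₂ᶜ x

/-- From a point of a bounded complementary component, a ray of increasing norm
first exits the component at a point of `K` of strictly larger norm. -/
lemma exists_larger {K : Set ℂ} (hK : IsCompact K) {x z : ℂ}
    (hb : Bornology.IsBounded (connectedComponentIn Kᶜ x))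
    (hz : z ∈ connectedComponentIn Kᶜ x) :
    ∃ w, w ∈ K ∧ w ∈ closure (connectedComponentIn Kᶜ x) ∧ ‖z‖ < ‖w‖ := by
  set U := connectedComponentIn Kᶜ x with hUdef
  have hUopen : IsOpen U := hK.isClosed.isOpen_compl.connectedComponentIn
  obtain ⟨e, he, hze⟩ : ∃ e : ℂ, ‖e‖ = 1 ∧ z = (‖z‖ : ℂ) * e := by
    by_cases h0 : z = 0
    · exact ⟨1, by simp, by simp [h0]⟩
    · refine ⟨(‖z‖ : ℂ)⁻¹ * z, ?_, ?_⟩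
      · have hzn : ‖z‖ ≠ 0 := norm_ne_zero_iff.mpr h0
        rw [norm_mul, norm_inv]
        simp only [Complex.norm_real, Real.norm_eq_abs, abs_norm]
        field_simp
      · rw [← mul_assoc, mul_inv_cancel₀ (by exact_mod_cast norm_ne_zero_iff.mpr h0), one_mul]
  set f : ℝ → ℂ := fun t => ((‖z‖ + t : ℝ) : ℂ) * e with hfdef
  have hf0 : f 0 = z := by
    show ((‖z‖ + 0 : ℝ) : ℂ) * e = z
    rw [add_zero]; exact hze.symm
  have hfc : Continuous f := by
    apply Continuous.mul _ continuous_const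
    exact Complex.continuous_ofReal.comp (continuous_const.add continuous_id)
  have hfn : ∀ t, 0 ≤ t → ‖f t‖ = ‖z‖ + t := by
    intro t ht
    rw [hfdef]
    simp only [norm_mul, Complex.norm_real, he, mul_one]
    rw [Real.norm_eq_abs, abs_of_nonneg (by positivity)]
  set T : Set ℝ := {t | 0 ≤ t ∧ ∀ s, 0 ≤ s → s ≤ t → f s ∈ U} with hTdef
  have h0T : (0:ℝ) ∈ T := by
    refine ⟨le_refl _, fun s hs hs' => ?_⟩
    have : s = 0 := le_antisymm hs' hs
    rw [this, hf0]; exact hz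
  obtain ⟨R, hR⟩ := isBounded_iff_forall_norm_le.mp hb
  have hTbdd : BddAbove T := by
    refine ⟨R, fun t ht => ?_⟩
    have h1 := hR (f t) (ht.2 t ht.1 le_rfl)
    have h2 := hfn t ht.1
    have : 0 ≤ ‖z‖ := norm_nonneg _
    linarith
  set t₀ := sSup T with ht₀def
  have ht₀0 : 0 ≤ t₀ := le_csSup hTbdd h0T
  have hlt : ∀ s, 0 ≤ s → s < t₀ → f s ∈ U := by
    intro s hs hst
    obtain ⟨t, htT, hst'⟩ := exists_lt_of_lt_csSup ⟨0, h0T⟩ hst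
    exact htT.2 s hs hst'.le
  have hnotU : f t₀ ∉ U := by
    intro hmem
    have hopen : IsOpen (f ⁻¹' U) := hUopen.preimage hfc
    obtain ⟨ε, hε, hball⟩ := Metric.isOpen_iff.mp hopen t₀ hmem
    have hmemT : t₀ + ε/2 ∈ T := by
      refine ⟨by linarith, fun s hs hst => ?_⟩
      by_cases h : s < t₀
      · exact hlt s hs h
      · apply hball
        rw [Metric.mem_ball, Real.dist_eq, abs_of_nonneg (by linarith)]
        linarith
    have := le_csSup hTbdd hmemT
    linarith
  have ht₀pos : 0 < t₀ := by
    rcases lt_or_eq_of_le ht₀0 with h | h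
    · exact h
    · exfalso; apply hnotU; rw [← h, hf0]; exact hz
  have hcl : f t₀ ∈ closure U := by
    rw [Metric.mem_closure_iff]
    intro ε hε
    obtain ⟨δ, hδ, hδ'⟩ := Metric.continuous_iff.mp hfc t₀ ε hε
    set s := t₀ - min (δ/2) (t₀/2) with hsdef
    have hm1 := min_le_right (δ/2) (t₀/2)
    have hm2 := min_le_left (δ/2) (t₀/2)
    have hm0 : 0 < min (δ/2) (t₀/2) := lt_min (by linarith) (by linarith)
    have hs0 : 0 ≤ s := by simp only [hsdef]; linarith
    have hst : s < t₀ := by simp only [hsdef]; linarith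
    refine ⟨f s, hlt s hs0 hst, ?_⟩
    rw [dist_comm]
    apply hδ'
    rw [Real.dist_eq, abs_of_nonpos (by simp only [hsdef]; linarith)]
    simp only [hsdef]; linarith
  have hwK : f t₀ ∈ K := by
    by_contra hnK
    have hmemC : f t₀ ∈ connectedComponentIn Kᶜ (f t₀) := mem_connectedComponentIn hnK
    have hCopen : IsOpen (connectedComponentIn Kᶜ (f t₀)) :=
      hK.isClosed.isOpen_compl.connectedComponentIn
    obtain ⟨q, hqC, hqU⟩ := (_root_.mem_closure_iff.mp hcl) _ hCopen hmemC
    have h1 : connectedComponentIn Kᶜ (f t₀) = connectedComponentIn Kᶜ q :=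
      connectedComponentIn_eq hqC
    have h2 : U = connectedComponentIn Kᶜ q := connectedComponentIn_eq hqU
    exact hnotU (h2 ▸ h1 ▸ hmemC)
  refine ⟨f t₀, hwK, hcl, ?_⟩
  rw [hfn t₀ ht₀0]; linarith

/-- Two nonempty compact sets cannot each lie in a bounded complementary
component of the other. -/
lemma not_mutual {A B : Set ℂ} (hA : IsCompact A) (hAne : A.Nonempty)
    (hB : IsCompact B) (hBne : B.Nonempty) {x y : ℂ}
    (hbx : Bornology.IsBounded (connectedComponentIn Bᶜ x))
    (hAx : A ⊆ connectedComponentIn Bᶜ x)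
    (hby : Bornology.IsBounded (connectedComponentIn Aᶜ y))
    (hBy : B ⊆ connectedComponentIn Aᶜ y) : False := by
  obtain ⟨a, haA, ha⟩ := hA.exists_isMaxOn hAne continuous_norm.continuousOn
  obtain ⟨b, hbB, hbmax⟩ := hB.exists_isMaxOn hBne continuous_norm.continuousOn
  obtain ⟨v, hvB, _, hav⟩ := exists_larger hB hbx (hAx haA)
  obtain ⟨u, huA, _, hbu⟩ := exists_larger hA hby (hBy hbB)
  have h1 : ‖v‖ ≤ ‖b‖ := hbmax hvB
  have h2 : ‖u‖ ≤ ‖a‖ := ha huA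
  linarith

/-- The surrounding order is a partial order (reflexive, antisymmetric and transitive)
on the collection of nonempty compact connected subsets of `ℂ`. -/
theorem stmt_1 :
    (∀ K : Set ℂ, K.Nonempty → IsCompact K → IsConnected K → SurroundingLE K K) ∧
    (∀ K₁ K₂ : Set ℂ, K₁.Nonempty → IsCompact K₁ → IsConnected K₁ →
      K₂.Nonempty → IsCompact K₂ → IsConnected K₂ →
      SurroundingLE K₁ K₂ → SurroundingLE K₂ K₁ → K₁ = K₂) ∧
    (∀ K₁ K₂ K₃ : Set ℂ, K₁.Nonempty → IsCompact K₁ → IsConnected K₁ →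
      K₂.Nonempty → IsCompact K₂ → IsConnected K₂ →
      K₃.Nonempty → IsCompact K₃ → IsConnected K₃ →
      SurroundingLE K₁ K₂ → SurroundingLE K₂ K₃ → SurroundingLE K₁ K₃) := by
  refine ⟨fun K _ _ _ => Or.inl rfl, ?_, ?_⟩
  · rintro K₁ K₂ h1ne h1c _ h2ne h2c _ (h | ⟨x, hx, hbx, hsx⟩) h2
    · exact h
    · rcases h2 with h | ⟨y, hy, hby, hsy⟩
      · exact h.symm
      · exact absurd (not_mutual h1c h1ne h2c h2ne hbx hsx hby hsy) id
  · rintro K₁ K₂ K₃ h1ne h1c h1conn h2ne h2c h2conn h3ne h3c h3conn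
      (rfl | ⟨x, hx, hbx, hsx⟩) h23
    · exact h23
    rcases h23 with rfl | ⟨y, hy, hby, hsy⟩
    · exact Or.inr ⟨x, hx, hbx, hsx⟩
    right
    refine ⟨y, hy, hby, ?_⟩
    set U := connectedComponentIn K₂ᶜ x with hUdef
    set V := connectedComponentIn K₃ᶜ y with hVdef
    have hVsub : V ⊆ K₃ᶜ := connectedComponentIn_subset _ _
    have hK3K2 : K₃ ⊆ K₂ᶜ := fun p hp hpK2 => hVsub (hsy hpK2) hp
    -- K₃ does not meet U
    have hU3 : U ∩ K₃ = ∅ := by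
      by_contra h
      obtain ⟨q, hqU, hqK3⟩ := Set.nonempty_iff_ne_empty.mpr h
      have hUq : U = connectedComponentIn K₂ᶜ q := connectedComponentIn_eq hqU
      have h3U : K₃ ⊆ U := by
        rw [hUq]
        exact h3conn.isPreconnected.subset_connectedComponentIn hqK3 hK3K2
      exact not_mutual h3c h3ne h2c h2ne hbx h3U hby hsy
    have hUK3c : U ⊆ K₃ᶜ := fun p hp hpK3 =>
      (Set.eq_empty_iff_forall_notMem.mp hU3 p) ⟨hp, hpK3⟩
    -- a meeting point of closure U and V
    obtain ⟨w, hwK2, hwcl, _⟩ := exists_larger h2c hbx (mem_connectedComponentIn hx)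
    have hwV : w ∈ V := hsy hwK2
    -- closure U is in K₃ᶜ
    have hclsub : closure U ⊆ K₃ᶜ := by
      intro p hp hpK3
      by_cases hpU : p ∈ U
      · exact hUK3c hpU hpK3
      · -- p ∈ closure U \ U ⊆ K₂ ⊆ V ⊆ K₃ᶜ
        have hpK2 : p ∈ K₂ := by
          by_contra hnK
          have hmemC : p ∈ connectedComponentIn K₂ᶜ p := mem_connectedComponentIn hnK
          have hCopen : IsOpen (connectedComponentIn K₂ᶜ p) :=
            h2c.isClosed.isOpen_compl.connectedComponentIn
          obtain ⟨q, hqC, hqU⟩ := (_root_.mem_closure_iff.mp hp) _ hCopen hmemC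
          have h1 : connectedComponentIn K₂ᶜ p = connectedComponentIn K₂ᶜ q :=
            connectedComponentIn_eq hqC
          have h2 : U = connectedComponentIn K₂ᶜ q := connectedComponentIn_eq hqU
          exact hpU (h2 ▸ h1 ▸ hmemC)
        exact hVsub (hsy hpK2) hpK3
    -- closure U ∪ V is preconnected, inside K₃ᶜ, contains y
    have hUconn : IsPreconnected (closure U) :=
      (isPreconnected_connectedComponentIn).closure
    have hVconn : IsPreconnected V := isPreconnected_connectedComponentIn
    have hunion : IsPreconnected (closure U ∪ V) :=
      IsPreconnected.union w hwcl hwV hUconn hVconn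
    have hysub : closure U ∪ V ⊆ V := by
      rw [hVdef]
      apply hunion.subset_connectedComponentIn
      · exact Or.inr (mem_connectedComponentIn hy)
      · exact Set.union_subset hclsub hVsub
    exact fun p hp => hysub (Or.inl (subset_closure (hsx hp)))
end

section
/- Let F ⊆ ℝ be an open set and s > 1 a real number such that s·x ∈ F for every x ∈ F. Suppose the open interval (r₁, r₂), with 0 ≤ r₁ < r₂ < ∞, is a connected component of F, and suppose s·r₁ < r₂. Then (r₁, ∞) ⊆ F. -/
/-- Let `F ⊆ ℝ` be open and `s > 1` with `s·x ∈ F` for every `x ∈ F`. If the open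
interval `(r₁, r₂)`, with `0 ≤ r₁ < r₂`, is a connected component of `F` and
`s·r₁ < r₂`, then `(r₁, ∞) ⊆ F`. -/
theorem stmt_2 (F : Set ℝ) (hF : IsOpen F) (s : ℝ) (hs : 1 < s)
    (hinv : ∀ x ∈ F, s * x ∈ F)
    (r₁ r₂ : ℝ) (hr₁ : 0 ≤ r₁) (hr₁₂ : r₁ < r₂)
    (hcomp : ∃ x ∈ F, Set.Ioo r₁ r₂ = connectedComponentIn F x)
    (hover : s * r₁ < r₂) :
    Set.Ioi r₁ ⊆ F := by
  have hs0 : (0:ℝ) < s := lt_trans one_pos hs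
  have hr₂0 : 0 < r₂ := lt_of_le_of_lt hr₁ hr₁₂
  have hbase : Set.Ioo r₁ r₂ ⊆ F := by
    obtain ⟨x, hx, heq⟩ := hcomp
    rw [heq]
    exact connectedComponentIn_subset F x
  have key : ∀ n : ℕ, Set.Ioo r₁ (s ^ n * r₂) ⊆ F := by
    intro n
    induction n with
    | zero => simpa using hbase
    | succ n ih =>
      intro y hy
      rcases lt_or_ge y (s ^ n * r₂) with h | h
      · exact ih ⟨hy.1, h⟩
      · have hpow : r₂ ≤ s ^ n * r₂ :=
          by nlinarith [one_le_pow₀ hs.le (n := n)]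
        have hy1 : r₁ < y / s := by
          rw [lt_div_iff₀ hs0, mul_comm]
          exact lt_of_lt_of_le hover (le_trans hpow h)
        have hy2 : y / s < s ^ n * r₂ := by
          rw [div_lt_iff₀ hs0]
          calc y < s ^ (n + 1) * r₂ := hy.2
          _ = s ^ n * r₂ * s := by ring
        have := hinv _ (ih ⟨hy1, hy2⟩)
        rwa [mul_div_cancel₀ y (ne_of_gt hs0)] at this
  intro y hy
  obtain ⟨n, hn⟩ := pow_unbounded_of_one_lt (y / r₂) hs
  have : y < s ^ n * r₂ := by
    rw [div_lt_iff₀ hr₂0] at hn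
    linarith [hn]
  exact key n ⟨hy, this⟩
end

section
/- Let X be a compact metric space, let m ≥ 2, and let h₁, …, h_m : X → X be continuous maps. Let L ⊆ X be a nonempty compact set with L = ⋃_{j=1}^m h_j⁻¹(L), and assume that for every finite word w = (w₁,…,w_k) ∈ {1,…,m}^k the set (h_{w_k} ∘ ⋯ ∘ h_{w₁})⁻¹(L) is nonempty. If h₁⁻¹(L) ∩ h_j⁻¹(L) = ∅ for every j ≠ 1, then L has infinitely many connected components. -/
/-- For a word `w = (w₁, …, w_k)` (as a list), the composition
`h_{w_k} ∘ ⋯ ∘ h_{w₁}`. -/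
def wordComp {X : Type*} {m : ℕ} (h : Fin m → X → X) (w : List (Fin m)) : X → X :=
  w.foldl (fun g i => h i ∘ g) id

theorem wordComp_append_singleton {X : Type*} {m : ℕ} (h : Fin m → X → X)
    (w : List (Fin m)) (j : Fin m) :
    wordComp h (w ++ [j]) = h j ∘ wordComp h w := by
  simp [wordComp, List.foldl_append]

theorem wordComp_replicate {X : Type*} {m : ℕ} (h : Fin m → X → X) (j : Fin m) (k : ℕ) :
    wordComp h (List.replicate k j) = (h j)^[k] := by
  induction k with
  | zero => rfl
  | succ k ih =>
      have : List.replicate (k+1) j = List.replicate k j ++ [j] := by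
        simp [List.replicate_succ']
      rw [this, wordComp_append_singleton, ih, Function.iterate_succ']

/-- Let `X` be a compact metric space, `m ≥ 2`, and `h₁, …, h_m : X → X` continuous.
Let `L` be a nonempty compact set with `L = ⋃_j h_j⁻¹(L)` and all iterated preimages
`h_w⁻¹(L)` nonempty.  If `h₁⁻¹(L)` is disjoint from `h_j⁻¹(L)` for every `j ≠ 1`,
then `L` has infinitely many connected components. -/
theorem stmt_3 {X : Type*} [MetricSpace X] [CompactSpace X]
    {m : ℕ} (hm : 2 ≤ m) (h : Fin m → X → X) (hcont : ∀ j, Continuous (h j))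
    (L : Set X) (hLne : L.Nonempty) (hLc : IsCompact L)
    (hbss : L = ⋃ j, h j ⁻¹' L)
    (hpre : ∀ w : List (Fin m), ((wordComp h w) ⁻¹' L).Nonempty)
    (hsep : ∀ j : Fin m, j ≠ ⟨0, by omega⟩ → h ⟨0, by omega⟩ ⁻¹' L ∩ h j ⁻¹' L = ∅) :
    {C : Set X | ∃ x ∈ L, C = connectedComponentIn L x}.Infinite := by
  classical
  set e0 : Fin m := ⟨0, by omega⟩ with he0
  set e1 : Fin m := ⟨1, by omega⟩ with he1
  have he10 : e1 ≠ e0 := by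
    simp [he0, he1, Fin.ext_iff]
  set g : X → X := h e0 with hg
  have hLcl : IsClosed L := hLc.isClosed
  set A : Set X := g ⁻¹' L with hA
  have hAcl : IsClosed A := hLcl.preimage (hcont e0)
  have hAL : A ⊆ L := by
    intro x hx
    rw [hbss]
    exact Set.mem_iUnion.2 ⟨e0, hx⟩
  -- points mapped into L by some non-zero h j are in L \ A
  have hBmem : ∀ j : Fin m, j ≠ e0 → h j ⁻¹' L ⊆ L \ A := by
    intro j hj x hx
    refine ⟨by rw [hbss]; exact Set.mem_iUnion.2 ⟨j, hx⟩, ?_⟩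
    intro hxA
    have : x ∈ h e0 ⁻¹' L ∩ h j ⁻¹' L := ⟨hxA, hx⟩
    rw [hsep j hj] at this
    exact this
  have hBeq : L \ A = ⋃ j : {j : Fin m // j ≠ e0}, h j ⁻¹' L := by
    apply Set.Subset.antisymm
    · intro x hx
      obtain ⟨hxL, hxA⟩ := hx
      rw [hbss] at hxL
      obtain ⟨j, hj⟩ := Set.mem_iUnion.1 hxL
      rcases eq_or_ne j e0 with rfl | hne
      · exact absurd hj hxA
      · exact Set.mem_iUnion.2 ⟨⟨j, hne⟩, hj⟩
    · intro x hx
      obtain ⟨⟨j, hj⟩, hx⟩ := Set.mem_iUnion.1 hx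
      exact hBmem j hj hx
  have hBcl : IsClosed (L \ A) := by
    rw [hBeq]
    exact isClosed_iUnion_of_finite fun j => hLcl.preimage (hcont j)
  -- the decreasing chain
  set Ak : ℕ → Set X := fun k => g^[k] ⁻¹' L with hAk
  have hAk0 : Ak 0 = L := by simp [hAk]
  have hgkcont : ∀ k, Continuous (g^[k]) := fun k => (hcont e0).iterate k
  have hAksucc : ∀ k, Ak (k+1) = g^[k] ⁻¹' A := by
    intro k
    simp only [hAk, Function.iterate_succ', Set.preimage_comp]
    rfl
  set D : ℕ → Set X := fun k => g^[k] ⁻¹' (L \ A) with hD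
  have hDeq : ∀ k, D k = Ak k \ Ak (k+1) := by
    intro k
    rw [hAksucc k]
    simp [hD, hAk, Set.preimage_diff]
  have hstep : ∀ k, Ak (k+1) ⊆ Ak k := by
    intro k
    rw [hAksucc k]
    exact Set.preimage_mono hAL
  have hanti : ∀ i j, i ≤ j → Ak j ⊆ Ak i := by
    intro i j hij
    induction j with
    | zero =>
        have : i = 0 := Nat.le_zero.1 hij
        subst this; rfl
    | succ j ih =>
        rcases Nat.lt_or_ge i (j+1) with hlt | hge
        · exact (hstep j).trans (ih (by omega))
        · have : i = j + 1 := by omega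
          subst this; rfl
  have hAkL : ∀ k, Ak k ⊆ L := fun k => hAk0 ▸ hanti 0 k (Nat.zero_le k)
  have hDcl : ∀ k, IsClosed (D k) := fun k => hBcl.preimage (hgkcont k)
  have hDL : ∀ k, D k ⊆ L := by
    intro k
    rw [hDeq k]
    exact (Set.diff_subset).trans (hAkL k)
  -- nonemptiness of the pieces
  have hDne : ∀ k, (D k).Nonempty := by
    intro k
    obtain ⟨x, hx⟩ := hpre (List.replicate k e0 ++ [e1])
    rw [Set.mem_preimage, wordComp_append_singleton, wordComp_replicate] at hx
    exact ⟨x, hBmem e1 he10 hx⟩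
  -- L \ Ak k is closed
  have hLA : ∀ k, IsClosed (L \ Ak k) := by
    intro k
    induction k with
    | zero => simpa [hAk0] using isClosed_empty
    | succ k ih =>
        have : L \ Ak (k+1) = (L \ Ak k) ∪ D k := by
          ext x
          have h1 := hstep k
          have h2 := hAkL k
          rw [hDeq k]
          constructor
          · rintro ⟨hxL, hxn⟩
            by_cases hk : x ∈ Ak k
            · exact Or.inr ⟨hk, hxn⟩
            · exact Or.inl ⟨hxL, hk⟩
          · rintro (⟨hxL, hxn⟩ | ⟨hxk, hxn⟩)
            · exact ⟨hxL, fun hc => hxn (h1 hc)⟩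
            · exact ⟨h2 hxk, hxn⟩
        rw [this]
        exact ih.union (hDcl k)
  have hLDcl : ∀ k, IsClosed (L \ D k) := by
    intro k
    have : L \ D k = (L \ Ak k) ∪ Ak (k+1) := by
      ext x
      have h1 := hstep k
      have h2 := hAkL (k+1)
      rw [hDeq k]
      constructor
      · rintro ⟨hxL, hxn⟩
        by_cases hk : x ∈ Ak k
        · by_cases hk1 : x ∈ Ak (k+1)
          · exact Or.inr hk1
          · exact absurd ⟨hk, hk1⟩ hxn
        · exact Or.inl ⟨hxL, hk⟩
      · rintro (⟨hxL, hxn⟩ | hx1)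
        · exact ⟨hxL, fun hc => hxn hc.1⟩
        · exact ⟨h2 hx1, fun hc => hc.2 hx1⟩
    rw [this]
    exact (hLA k).union ((hLcl.preimage (hgkcont (k+1))))
  -- disjointness
  have hDdisj : ∀ i j, i < j → ∀ x, x ∈ D i → x ∈ D j → False := by
    intro i j hij x hxi hxj
    have hxj' : x ∈ Ak (i+1) := hanti (i+1) j hij ((hDeq j ▸ hxj).1)
    exact (hDeq i ▸ hxi).2 hxj'
  -- choose points
  choose xp hxp using hDne
  set f : ℕ → Set X := fun i => connectedComponentIn L (xp i) with hf
  have hxpL : ∀ i, xp i ∈ L := fun i => hDL i (hxp i)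
  have hfsub : ∀ i, f i ⊆ D i := by
    intro i
    have hpc : IsPreconnected (f i) := isPreconnected_connectedComponentIn
    by_contra hns
    obtain ⟨y, hy, hyn⟩ := Set.not_subset.1 hns
    have hysub : f i ⊆ L := connectedComponentIn_subset L (xp i)
    have hcover : f i ⊆ D i ∪ (L \ D i) := by
      intro z hz
      by_cases hzD : z ∈ D i
      · exact Or.inl hzD
      · exact Or.inr ⟨hysub hz, hzD⟩
    have := isPreconnected_closed_iff.1 hpc (D i) (L \ D i) (hDcl i) (hLDcl i) hcover
      ⟨xp i, mem_connectedComponentIn (hxpL i), hxp i⟩ ⟨y, hy, hysub hy, hyn⟩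
    obtain ⟨z, _, hz1, _, hz2⟩ := this
    exact hz2 hz1
  have hfinj : Function.Injective f := by
    intro i j hij
    by_contra hne
    have hxi : xp i ∈ f i := mem_connectedComponentIn (hxpL i)
    have hxij : xp i ∈ D j := hfsub j (hij ▸ hxi)
    rcases Nat.lt_or_ge i j with hlt | hge
    · exact hDdisj i j hlt (xp i) (hxp i) hxij
    · exact hDdisj j i (by omega) (xp i) hxij (hxp i)
  exact Set.infinite_of_injective_forall_mem hfinj fun i => ⟨xp i, hxpL i, rfl⟩
end

section
/- Let X be a compact metric space, K ⊆ X a compact set, J a connected component of K, and z₀ ∈ J. Let (Aₙ) be a sequence of nonempty compact connected subsets of K such that dist(z₀, Aₙ) → 0 as n → ∞. Then sup_{z ∈ Aₙ} dist(z, J) → 0 as n → ∞. -/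
open Metric Filter Set

/-- Let `X` be a compact metric space, `K ⊆ X` compact, `J` a connected component of
`K`, and `z₀ ∈ J`.  If `(Aₙ)` is a sequence of nonempty compact connected subsets of
`K` with `dist(z₀, Aₙ) → 0`, then `sup_{z ∈ Aₙ} dist(z, J) → 0`. -/
theorem stmt_6 {X : Type*} [MetricSpace X] [CompactSpace X]
    (K : Set X) (hK : IsCompact K)
    (J : Set X) (z₀ : X) (hz₀ : z₀ ∈ J)
    (hJ : ∃ x ∈ K, J = connectedComponentIn K x)
    (A : ℕ → Set X)
    (hAne : ∀ n, (A n).Nonempty) (hAc : ∀ n, IsCompact (A n))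
    (hAconn : ∀ n, IsConnected (A n)) (hAK : ∀ n, A n ⊆ K)
    (hdist : Tendsto (fun n => infDist z₀ (A n)) atTop (nhds 0)) :
    Tendsto (fun n => sSup ((fun z => infDist z J) '' A n)) atTop (nhds 0) := by
  obtain ⟨x, hxK, hJx⟩ := hJ
  have hz₀cc : z₀ ∈ connectedComponentIn K x := hJx ▸ hz₀
  have hz₀K : z₀ ∈ K := connectedComponentIn_subset K x hz₀cc
  have hJz : J = connectedComponentIn K z₀ := by
    rw [hJx]; exact connectedComponentIn_eq hz₀cc
  haveI : CompactSpace K := isCompact_iff_compactSpace.mp hK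
  set z₀' : K := ⟨z₀, hz₀K⟩
  have hJim : J = Subtype.val '' connectedComponent z₀' := by
    rw [hJz, connectedComponentIn_eq_image hz₀K]
  have key : ∀ ε > 0, ∀ᶠ n in atTop, ∀ z ∈ A n, infDist z J < ε := by
    intro ε hε
    set V : Set X := {y | infDist y J < ε} with hV
    have hVopen : IsOpen V := isOpen_lt (continuous_infDist_pt J) continuous_const
    have hsub : connectedComponent z₀' ⊆ Subtype.val ⁻¹' V := by
      intro y hy
      have hyJ : (y : X) ∈ J := hJim ▸ ⟨y, hy, rfl⟩
      show infDist (y : X) J < ε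
      rw [infDist_zero_of_mem hyJ]; exact hε
    obtain ⟨Z, hZclopen, hz₀Z, hZV⟩ :
        ∃ Z : Set K, IsClopen Z ∧ z₀' ∈ Z ∧ Z ⊆ Subtype.val ⁻¹' V := by
      have hcl : IsClosed ((Subtype.val ⁻¹' V)ᶜ : Set K) :=
        (hVopen.preimage continuous_subtype_val).isClosed_compl
      have H1 := hcl.isCompact.inter_iInter_nonempty
        (fun s : { s : Set K // IsClopen s ∧ z₀' ∈ s } => (s : Set K)) (fun s => s.2.1.1)
      rw [← not_disjoint_iff_nonempty_inter, imp_not_comm, not_forall] at H1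
      have hdisj : Disjoint ((Subtype.val ⁻¹' V)ᶜ : Set K)
          (⋂ s : { s : Set K // IsClopen s ∧ z₀' ∈ s }, (s : Set K)) := by
        rw [← connectedComponent_eq_iInter_isClopen]
        exact disjoint_compl_left_iff_subset.2 hsub
      obtain ⟨si, H2⟩ := H1 hdisj
      refine ⟨⋂ s ∈ si, (s : Set K), isClopen_biInter_finset fun s _ => s.2.1,
        mem_iInter₂.2 fun s _ => s.2.2, ?_⟩
      rwa [← disjoint_compl_left_iff_subset, disjoint_iff_inter_eq_empty,
        ← not_nonempty_iff_eq_empty]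
    obtain ⟨O, hOopen, hOZ⟩ := isOpen_induced_iff.mp hZclopen.2
    have hz₀O : z₀ ∈ O := by
      have : z₀' ∈ Subtype.val ⁻¹' O := hOZ ▸ hz₀Z
      exact this
    obtain ⟨r, hr, hball⟩ := Metric.isOpen_iff.mp hOopen z₀ hz₀O
    set U : Set X := Subtype.val '' Z with hU
    have hUV : U ⊆ V := by
      rintro _ ⟨y, hy, rfl⟩; exact hZV hy
    have hUclosed : IsClosed U :=
      (hZclopen.1.isCompact.image continuous_subtype_val).isClosed
    have hKUclosed : IsClosed (K \ U) := by
      have : K \ U = Subtype.val '' (Zᶜ : Set K) := by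
        ext y
        constructor
        · rintro ⟨hyK, hyU⟩
          exact ⟨⟨y, hyK⟩, fun h => hyU ⟨⟨y, hyK⟩, h, rfl⟩, rfl⟩
        · rintro ⟨⟨y, hyK⟩, hyZ, rfl⟩
          refine ⟨hyK, ?_⟩
          rintro ⟨w, hwZ, hwy⟩
          exact hyZ (by rwa [show w = (⟨y, hyK⟩ : K) from Subtype.ext hwy] at hwZ)
      rw [this]
      exact ((hZclopen.compl.1.isCompact).image continuous_subtype_val).isClosed
    filter_upwards [hdist.eventually (Iio_mem_nhds hr)] with n hn
    obtain ⟨a, haA, hda⟩ := (infDist_lt_iff (hAne n)).mp hn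
    have haK : a ∈ K := hAK n haA
    have haU : a ∈ U := by
      have : (⟨a, haK⟩ : K) ∈ Z := by
        rw [← hOZ]
        exact hball (by simpa [Metric.mem_ball, dist_comm] using hda)
      exact ⟨⟨a, haK⟩, this, rfl⟩
    have hsplit : A n ⊆ U ∪ (K \ U) := fun y hy => by
      by_cases h : y ∈ U
      · exact Or.inl h
      · exact Or.inr ⟨hAK n hy, h⟩
    have hAU : A n ⊆ U := by
      rcases (isPreconnected_iff_subset_of_fully_disjoint_closed (hAc n).isClosed).mp
          (hAconn n).isPreconnected U (K \ U) hUclosed hKUclosed hsplit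
          disjoint_sdiff_right with h | h
      · exact h
      · exact absurd ((h haA).2 haU) (fun q => q)
    intro z hz
    exact hUV (hAU hz)
  rw [Metric.tendsto_atTop]
  intro ε hε
  obtain ⟨N, hN⟩ := eventually_atTop.mp (key (ε / 2) (by positivity))
  refine ⟨N, fun n hn => ?_⟩
  have hbdd : BddAbove ((fun z => infDist z J) '' A n) :=
    ((hAc n).image (continuous_infDist_pt J)).bddAbove
  obtain ⟨a, ha⟩ := hAne n
  have h0 : (0 : ℝ) ≤ sSup ((fun z => infDist z J) '' A n) :=
    le_trans infDist_nonneg (le_csSup hbdd ⟨a, ha, rfl⟩)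
  have hle : sSup ((fun z => infDist z J) '' A n) ≤ ε / 2 := by
    apply csSup_le ((hAne n).image _)
    rintro b ⟨z, hz, rfl⟩
    exact (hN n hn z hz).le
  rw [Real.dist_eq, sub_zero, abs_of_nonneg h0]
  linarith
end
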